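/- arXiv:2605.24878 — 2 statements merged into one kernel-verified Lean document; each statement's English description precedes it below -/
import Mathlib

section
/- (Entropy bias.) Fix B>0. There exists a structural constant C (also depending on B) such that for every 0<λ≤1, every q∈𝒬, and every y∈ℝ^{2Q+1} with ‖y‖_∞≤B: 0 ≤ H_q⁰(y) − H_q^λ(y) ≤ C·λ(1+|log λ|). -/
/-!
For fixed `y` and `q`, the map `δ ↦ H_q(y, δ)` is `K`-Lipschitz on `A` with `K` uniform in
`‖y‖_∞ ≤ B`, because each side of the book contributes `(x, c) ↦ Λ(x)/γ · (1 - e^{-γ(x + c)})`,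
a `C¹` function on the compact convex set `[δ̲, δ̄] × [-2B, 2B]`. The soft maximum
`λ log ∫ e^{H/λ} dν` never exceeds the hard one since `ν` is a probability measure. Conversely,
on a box of side `r = λ(δ̄ - δ̲)` around a maximiser we have `H ≥ H⁰ - K r`, and the box has
`ν`-mass at least `m₋ r²`, so `H⁰ - H^λ ≤ K r - λ log (m₋ r²) = O(λ (1 + |log λ|))`.
-/

open MeasureTheory
open scoped Classical

noncomputable section

namespace MM

/-- Inventory index type `{-Q, …, Q}`. -/
abbrev QI (Q : ℕ) := {q : ℤ // q ∈ Finset.Icc (-(Q : ℤ)) (Q : ℤ)}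

/-- Vectors in `ℝ^{2Q+1}`, indexed by the inventory set. -/
abbrev Vec (Q : ℕ) := QI Q → ℝ

/-- The quote rectangle `A = [δ̲, δ̄]²`. -/
def Aset (dlo dhi : ℝ) : Set (ℝ × ℝ) := Set.Icc dlo dhi ×ˢ Set.Icc dlo dhi

/-- Extension of a vector by zero outside the inventory set. -/
def ext {Q : ℕ} (y : Vec Q) (z : ℤ) : ℝ :=
  if h : z ∈ Finset.Icc (-(Q : ℤ)) (Q : ℤ) then y ⟨z, h⟩ else 0

/-- `Λ_q^a(x) = Λ^a(x)·1_{q > -Q}`. -/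
def Lqa {Q : ℕ} (La : ℝ → ℝ) (q : QI Q) (x : ℝ) : ℝ :=
  if -(Q : ℤ) < q.1 then La x else 0

/-- `Λ_q^b(x) = Λ^b(x)·1_{q < Q}`. -/
def Lqb {Q : ℕ} (Lb : ℝ → ℝ) (q : QI Q) (x : ℝ) : ℝ :=
  if q.1 < (Q : ℤ) then Lb x else 0

/-- `Δ_q^a(y, δ)`. -/
def DelA {Q : ℕ} (y : Vec Q) (δ : ℝ × ℝ) (q : QI Q) : ℝ :=
  if -(Q : ℤ) < q.1 then δ.1 + ext y (q.1 - 1) - y q else 0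

/-- `Δ_q^b(y, δ)`. -/
def DelB {Q : ℕ} (y : Vec Q) (δ : ℝ × ℝ) (q : QI Q) : ℝ :=
  if q.1 < (Q : ℤ) then δ.2 + ext y (q.1 + 1) - y q else 0

/-- The deterministic-action Hamiltonian `H_q(y, δ)`. -/
def Ham {Q : ℕ} (σ γ η : ℝ) (La Lb : ℝ → ℝ) (y : Vec Q) (δ : ℝ × ℝ) (q : QI Q) : ℝ :=
  -η * (q.1 : ℝ) ^ 2 - γ * σ ^ 2 / 2 * (q.1 : ℝ) ^ 2
    + Lqa La q δ.1 / γ * (1 - Real.exp (-γ * DelA y δ q))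
    + Lqb Lb q δ.2 / γ * (1 - Real.exp (-γ * DelB y δ q))

/-- The hard Hamiltonian `H_q⁰(y) = sup_{δ ∈ A} H_q(y, δ)`. -/
def H0 {Q : ℕ} (σ γ η dlo dhi : ℝ) (La Lb : ℝ → ℝ) (y : Vec Q) (q : QI Q) : ℝ :=
  ⨆ δ : Aset dlo dhi, Ham σ γ η La Lb y δ.1 q

/-- The soft (entropy-regularized) Hamiltonian `H_q^λ(y)`. -/
def Hlam {Q : ℕ} (σ γ η : ℝ) (La Lb : ℝ → ℝ) (ν : Measure (ℝ × ℝ)) (lam : ℝ)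
    (y : Vec Q) (q : QI Q) : ℝ :=
  lam * Real.log (∫ δ, Real.exp (Ham σ γ η La Lb y δ q / lam) ∂ν)

/-- The generator matrix `K^δ`. -/
def Kmat (Q : ℕ) (σ γ η : ℝ) (La Lb : ℝ → ℝ) (δ : ℝ × ℝ) :
    Matrix (QI Q) (QI Q) ℝ := fun i j =>
  (if j = i then
      γ ^ 2 * σ ^ 2 / 2 * (i.1 : ℝ) ^ 2 + γ * η * (i.1 : ℝ) ^ 2
        - Lqa La i δ.1 - Lqb Lb i δ.2 else 0)
  + (if j.1 = i.1 - 1 then Lqa La i δ.1 * Real.exp (-γ * δ.1) else 0)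
  + (if j.1 = i.1 + 1 then Lqb Lb i δ.2 * Real.exp (-γ * δ.2) else 0)

/-- The matrix exponential, entrywise via its power series. -/
def matExp {n : Type*} [Fintype n] [DecidableEq n] (M : Matrix n n ℝ) :
    Matrix n n ℝ := fun i j => ∑' k : ℕ, ((k.factorial : ℝ))⁻¹ * (M ^ k) i j

/-- The one-step certainty-equivalent score `C_h^δ φ (q)`. -/
def CE {Q : ℕ} (σ γ η : ℝ) (La Lb : ℝ → ℝ) (h : ℝ) (δ : ℝ × ℝ) (φ : Vec Q)
    (q : QI Q) : ℝ :=
  -(1 / γ) * Real.log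
    ((matExp (h • Kmat Q σ γ η La Lb δ)).mulVec (fun r => Real.exp (-γ * φ r)) q)

/-- The entropy-regularized CE-score Bellman operator `T_h^λ`. -/
def Top {Q : ℕ} (σ γ η : ℝ) (La Lb : ℝ → ℝ) (ν : Measure (ℝ × ℝ)) (h lam : ℝ)
    (φ : Vec Q) : Vec Q := fun q =>
  h * lam * Real.log (∫ δ, Real.exp (CE σ γ η La Lb h δ φ q / (h * lam)) ∂ν)

/-- The discrete CE-score values: `dval … k = v^{h,λ}_{N-k}`, i.e. `k` backward
steps from the terminal condition `v^{h,λ}_{N,q} = -Φ q²`. -/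
def dval {Q : ℕ} (σ γ η Φ : ℝ) (La Lb : ℝ → ℝ) (ν : Measure (ℝ × ℝ))
    (h lam : ℝ) : ℕ → Vec Q
  | 0 => fun q => -Φ * (q.1 : ℝ) ^ 2
  | k + 1 => Top σ γ η La Lb ν h lam (dval σ γ η Φ La Lb ν h lam k)

/-- The soft-HJB Euler iterates: `eulerVal … k = v̂^{h,λ}_{N-k}`. -/
def eulerVal {Q : ℕ} (σ γ η Φ : ℝ) (La Lb : ℝ → ℝ) (ν : Measure (ℝ × ℝ))
    (h lam : ℝ) : ℕ → Vec Q
  | 0 => fun q => -Φ * (q.1 : ℝ) ^ 2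
  | k + 1 => fun q =>
      eulerVal σ γ η Φ La Lb ν h lam k q
        + h * Hlam σ γ η La Lb ν lam (eulerVal σ γ η Φ La Lb ν h lam k) q

/-- The Gibbs probability measure with score `g` relative to `ν`. -/
def gibbs (ν : Measure (ℝ × ℝ)) (g : ℝ × ℝ → ℝ) : Measure (ℝ × ℝ) :=
  ν.withDensity fun δ => ENNReal.ofReal (Real.exp (g δ) / ∫ ζ, Real.exp (g ζ) ∂ν)

/-- The active projection `P_q`. -/
def Pq {Q : ℕ} (q : QI Q) (ξ : ℝ × ℝ) : ℝ × ℝ :=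
  (if -(Q : ℤ) < q.1 then ξ.1 else 0, if q.1 < (Q : ℤ) then ξ.2 else 0)

/-- Euclidean norm on `ℝ²`. -/
def enorm2 (ξ : ℝ × ℝ) : ℝ := Real.sqrt (ξ.1 ^ 2 + ξ.2 ^ 2)

/-- The optimal quote set `𝒜_q*` for the value vector `y`. -/
def argmaxSet {Q : ℕ} (σ γ η dlo dhi : ℝ) (La Lb : ℝ → ℝ) (y : Vec Q) (q : QI Q) :
    Set (ℝ × ℝ) :=
  {δ ∈ Aset dlo dhi | ∀ ζ ∈ Aset dlo dhi, Ham σ γ η La Lb y ζ q ≤ Ham σ γ η La Lb y δ q}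

/-- Active-coordinate distance to a set of quotes. -/
def distq {Q : ℕ} (q : QI Q) (δ : ℝ × ℝ) (S : Set (ℝ × ℝ)) : ℝ :=
  ⨅ d ∈ S, enorm2 (Pq q (δ - d))

/-- Kullback–Leibler divergence with the `+∞` convention. -/
def KLdiv (π ν : Measure (ℝ × ℝ)) : EReal :=
  if π ≪ ν ∧ Integrable
      (fun δ => ((π.rnDeriv ν δ).toReal) * Real.log ((π.rnDeriv ν δ).toReal)) ν
  then ((∫ δ, ((π.rnDeriv ν δ).toReal) * Real.log ((π.rnDeriv ν δ).toReal) ∂ν : ℝ) : EReal)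
  else ⊤

end MM

section SoftMax

variable {α : Type*} [MeasurableSpace α] {μ : Measure α} {g : α → ℝ} {M lam : ℝ}

theorem mul_log_integral_exp_div_le [IsProbabilityMeasure μ] (hlam : 0 < lam)
    (hg : ∀ᵐ x ∂μ, g x ≤ M) (hint : Integrable (fun x => Real.exp (g x / lam)) μ) :
    lam * Real.log (∫ x, Real.exp (g x / lam) ∂μ) ≤ M := by
  have hle : ∫ x, Real.exp (g x / lam) ∂μ ≤ Real.exp (M / lam) := by
    calc ∫ x, Real.exp (g x / lam) ∂μ ≤ ∫ _, Real.exp (M / lam) ∂μ := by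
          refine integral_mono_ae hint (integrable_const _) ?_
          filter_upwards [hg] with x hx
          gcongr
      _ = Real.exp (M / lam) := by simp
  have hlog := Real.log_le_log (integral_exp_pos hint) hle
  rw [Real.log_exp, le_div_iff₀ hlam] at hlog
  linarith

theorem sub_mul_log_integral_exp_div_le [IsFiniteMeasure μ] {s : Set α} {ε : ℝ} (hlam : 0 < lam)
    (hs : MeasurableSet s) (hμs : 0 < μ.real s) (hg : ∀ x ∈ s, M - ε ≤ g x)
    (hint : Integrable (fun x => Real.exp (g x / lam)) μ) :
    M - lam * Real.log (∫ x, Real.exp (g x / lam) ∂μ) ≤ ε - lam * Real.log (μ.real s) := by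
  have hle : μ.real s * Real.exp ((M - ε) / lam) ≤ ∫ x, Real.exp (g x / lam) ∂μ :=
    calc μ.real s * Real.exp ((M - ε) / lam) = ∫ _ in s, Real.exp ((M - ε) / lam) ∂μ := by
          rw [setIntegral_const, smul_eq_mul]
      _ ≤ ∫ x in s, Real.exp (g x / lam) ∂μ :=
          setIntegral_mono_on (integrableOn_const (measure_ne_top μ s)) hint.integrableOn hs
            fun x hx => by gcongr; exact hg x hx
      _ ≤ ∫ x, Real.exp (g x / lam) ∂μ :=
          setIntegral_le_integral hint (.of_forall fun _ => (Real.exp_pos _).le)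
  have hlog := Real.log_le_log (by positivity) hle
  rw [Real.log_mul hμs.ne' (Real.exp_pos _).ne', Real.log_exp] at hlog
  have := mul_le_mul_of_nonneg_left hlog hlam.le
  rw [mul_add, mul_div_cancel₀ _ hlam.ne'] at this
  linarith

end SoftMax

theorem MeasureTheory.Integrable.of_continuousOn_of_ae_mem {α β : Type*} [TopologicalSpace α]
    [T2Space α] [MeasurableSpace α] [OpensMeasurableSpace α] [NormedAddCommGroup β] {μ : Measure α}
    [IsFiniteMeasure μ] {f : α → β} {s : Set α} (hs : IsCompact s) (hf : ContinuousOn f s)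
    (hμ : ∀ᵐ x ∂μ, x ∈ s) : Integrable f μ := by
  rw [← Measure.restrict_eq_self_of_ae_mem hμ]
  exact hf.integrableOn_compact hs

theorem MeasureTheory.ofReal_mul_le_withDensity_restrict_apply {α : Type*} [MeasurableSpace α]
    {μ : Measure α} {m : α → ℝ} {A S : Set α} {c : ℝ} (hS : MeasurableSet S) (hSA : S ⊆ A)
    (hm : ∀ᵐ x ∂μ.restrict A, c ≤ m x) :
    ENNReal.ofReal c * μ S ≤ (μ.restrict A).withDensity (fun x => ENNReal.ofReal (m x)) S := by
  rw [withDensity_apply _ hS, Measure.restrict_restrict hS, Set.inter_eq_left.mpr hSA,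
    ← setLIntegral_const]
  refine lintegral_mono_ae ?_
  filter_upwards [ae_restrict_of_ae_restrict_of_subset hSA hm] with x hx
  exact ENNReal.ofReal_le_ofReal hx

theorem exists_Icc_subset_Icc_inter_Icc {a b x r : ℝ} (hx : x ∈ Set.Icc a b) (hr : 0 ≤ r)
    (hrab : r ≤ b - a) :
    ∃ c, Set.Icc c (c + r) ⊆ Set.Icc a b ∩ Set.Icc (x - r) (x + r) := by
  refine ⟨min x (b - r), fun z hz => ⟨⟨?_, ?_⟩, ?_, ?_⟩⟩ <;>
    cases hz <;> cases hx <;> cases min_choice x (b - r) <;> simp_all <;> linarith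

theorem LipschitzOnWith.sub_mul_le_of_dist_le {α : Type*} [PseudoMetricSpace α] {f : α → ℝ}
    {K : NNReal} {s : Set α} (hf : LipschitzOnWith K f s) {x x₀ : α} (hx : x ∈ s)
    (hx₀ : x₀ ∈ s) {r : ℝ} (hr : dist x x₀ ≤ r) : f x₀ - K * r ≤ f x := by
  have h := (le_abs_self _).trans ((Real.dist_eq _ _ ▸ hf.dist_le_mul x₀ hx₀ x hx).trans
    (mul_le_mul_of_nonneg_left (dist_comm x x₀ ▸ hr) K.2))
  linarith

theorem mul_sub_mul_log_mul_sq_le {K ℓ c lam : ℝ} (hK : 0 ≤ K) (hℓ : 0 < ℓ) (hc : 0 < c)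
    (hlam : 0 < lam) :
    K * (lam * ℓ) - lam * Real.log (c * (lam * ℓ) ^ 2)
      ≤ (2 + K * ℓ + |Real.log c| + 2 * |Real.log ℓ|) * lam * (1 + |Real.log lam|) := by
  rw [Real.log_mul hc.ne' (by positivity), Real.log_pow, Real.log_mul hlam.ne' hℓ.ne']
  have hc' := mul_le_mul_of_nonneg_left (neg_abs_le (Real.log c)) hlam.le
  have hℓ' := mul_le_mul_of_nonneg_left (neg_abs_le (Real.log ℓ)) hlam.le
  have hlam' := mul_le_mul_of_nonneg_left (neg_abs_le (Real.log lam)) hlam.le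
  have hrest : 0 ≤ (K * ℓ + |Real.log c| + 2 * |Real.log ℓ|) * lam * |Real.log lam| := by
    positivity
  push_cast
  nlinarith

namespace MM

/-- One side of the Hamiltonian at `p = (x, c)`: quote `x`, and jump `c = y_{q∓1} - y_q` of the
value vector on a fill. -/
def sideGain (Λ : ℝ → ℝ) (γ : ℝ) (p : ℝ × ℝ) : ℝ :=
  Λ p.1 / γ * (1 - Real.exp (-γ * (p.1 + p.2)))

theorem exists_lipschitzOnWith_sideGain {Λ : ℝ → ℝ} {a b : ℝ}
    (hΛ : ContDiffOn ℝ 1 Λ (Set.Icc a b)) (γ R : ℝ) :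
    ∃ K, LipschitzOnWith K (sideGain Λ γ) (Set.Icc a b ×ˢ Set.Icc (-R) R) := by
  refine ContDiffOn.exists_lipschitzOnWith ?_ one_ne_zero
    ((convex_Icc a b).prod (convex_Icc _ _)) (isCompact_Icc.prod isCompact_Icc)
  refine ((hΛ.comp contDiff_fst.contDiffOn fun p hp => hp.1).div_const γ).mul ?_
  exact (contDiff_const.sub (by fun_prop)).contDiffOn

theorem abs_ext_le {Q : ℕ} {y : Vec Q} {B : ℝ} (hB : 0 ≤ B) (hy : ∀ q, |y q| ≤ B) (z : ℤ) :
    |ext y z| ≤ B := by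
  unfold ext
  split
  · exact hy _
  · simpa using hB

theorem ext_sub_mem_Icc {Q : ℕ} {y : Vec Q} {B : ℝ} (hB : 0 ≤ B) (hy : ∀ q, |y q| ≤ B)
    (z : ℤ) (q : QI Q) : ext y z - y q ∈ Set.Icc (-(2 * B)) (2 * B) := by
  have := (abs_sub _ _).trans (add_le_add (abs_ext_le hB hy z) (hy q))
  exact abs_le.mp (by linarith)

theorem ham_eq {Q : ℕ} (σ γ η : ℝ) (La Lb : ℝ → ℝ) (y : Vec Q) (δ : ℝ × ℝ) (q : QI Q) :
    Ham σ γ η La Lb y δ q = -η * (q.1 : ℝ) ^ 2 - γ * σ ^ 2 / 2 * (q.1 : ℝ) ^ 2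
      + (if -(Q : ℤ) < q.1 then sideGain La γ (δ.1, ext y (q.1 - 1) - y q) else 0)
      + (if q.1 < (Q : ℤ) then sideGain Lb γ (δ.2, ext y (q.1 + 1) - y q) else 0) := by
  unfold Ham Lqa Lqb DelA DelB sideGain
  split_ifs <;> simp [add_sub_assoc]

theorem lipschitzOnWith_ite_sideGain {Λ : ℝ → ℝ} {γ c R : ℝ} {I : Set ℝ} {K : NNReal}
    (hK : LipschitzOnWith K (sideGain Λ γ) (I ×ˢ Set.Icc (-R) R)) (hc : c ∈ Set.Icc (-R) R)
    {π : ℝ × ℝ → ℝ} (hπ : LipschitzWith 1 π) {s : Set (ℝ × ℝ)} (hs : Set.MapsTo π s I)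
    (P : Prop) [Decidable P] :
    LipschitzOnWith K (fun δ => if P then sideGain Λ γ (π δ, c) else 0) s := by
  by_cases hP : P
  · simp only [hP, if_true]
    simpa [Function.comp_def] using
      hK.comp ((LipschitzWith.prodMk_right c).comp hπ).lipschitzOnWith
        fun δ hδ => ⟨hs hδ, hc⟩
  · simp only [hP, if_false]
    exact (LipschitzWith.const (0 : ℝ)).lipschitzOnWith.weaken (by simp)

theorem exists_lipschitzOnWith_ham {Q : ℕ} (σ γ η : ℝ) {dlo dhi : ℝ} {La Lb : ℝ → ℝ}
    (hLa : ContDiffOn ℝ 1 La (Set.Icc dlo dhi)) (hLb : ContDiffOn ℝ 1 Lb (Set.Icc dlo dhi))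
    {B : ℝ} (hB : 0 ≤ B) :
    ∃ K, ∀ y : Vec Q, (∀ q, |y q| ≤ B) → ∀ q,
      LipschitzOnWith K (fun δ => Ham σ γ η La Lb y δ q) (Aset dlo dhi) := by
  obtain ⟨Ka, hKa⟩ := exists_lipschitzOnWith_sideGain hLa γ (2 * B)
  obtain ⟨Kb, hKb⟩ := exists_lipschitzOnWith_sideGain hLb γ (2 * B)
  refine ⟨0 + Ka + Kb, fun y hy q => ?_⟩
  simp_rw [ham_eq]
  exact ((LipschitzWith.const _).lipschitzOnWith.add
    (lipschitzOnWith_ite_sideGain hKa (ext_sub_mem_Icc hB hy _ q) LipschitzWith.prod_fst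
      (fun δ hδ => hδ.1) _)).add
    (lipschitzOnWith_ite_sideGain hKb (ext_sub_mem_Icc hB hy _ q) LipschitzWith.prod_snd
      (fun δ hδ => hδ.2) _)

theorem exists_box_subset_aset_inter_closedBall {dlo dhi r : ℝ} {δ : ℝ × ℝ}
    (hδ : δ ∈ Aset dlo dhi) (hr : 0 ≤ r) (hrd : r ≤ dhi - dlo) :
    ∃ a b, Set.Icc a (a + r) ×ˢ Set.Icc b (b + r) ⊆ Aset dlo dhi ∩ Metric.closedBall δ r := by
  obtain ⟨a, ha⟩ := exists_Icc_subset_Icc_inter_Icc hδ.1 hr hrd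
  obtain ⟨b, hb⟩ := exists_Icc_subset_Icc_inter_Icc hδ.2 hr hrd
  refine ⟨a, b, fun p hp => ⟨⟨(ha hp.1).1, (hb hp.2).1⟩, ?_⟩⟩
  rw [← Prod.mk.eta (p := δ), ← closedBall_prod_same, Real.closedBall_eq_Icc,
    Real.closedBall_eq_Icc]
  exact ⟨(ha hp.1).2, (hb hp.2).2⟩

theorem mul_sq_le_measureReal_box {ν : Measure (ℝ × ℝ)} [IsFiniteMeasure ν] {A : Set (ℝ × ℝ)}
    {m : ℝ × ℝ → ℝ} {c : ℝ} (hc : 0 ≤ c)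
    (hν : ν = (volume.restrict A).withDensity fun δ => ENNReal.ofReal (m δ))
    (hm : ∀ᵐ δ ∂(volume.restrict A), c ≤ m δ) {a b r : ℝ} (hr : 0 ≤ r)
    (hS : Set.Icc a (a + r) ×ˢ Set.Icc b (b + r) ⊆ A) :
    c * r ^ 2 ≤ ν.real (Set.Icc a (a + r) ×ˢ Set.Icc b (b + r)) := by
  have h := ofReal_mul_le_withDensity_restrict_apply (measurableSet_Icc.prod measurableSet_Icc)
    hS hm
  rw [← hν, Measure.volume_eq_prod, Measure.prod_prod, Real.volume_Icc, Real.volume_Icc,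
    add_sub_cancel_left, add_sub_cancel_left, ← ENNReal.ofReal_mul hr,
    ← ENNReal.ofReal_mul hc] at h
  have := ENNReal.toReal_mono (measure_ne_top ν _) h
  rwa [ENNReal.toReal_ofReal (by positivity), ← sq] at this

theorem H0_eq_of_isMaxOn {Q : ℕ} {σ γ η dlo dhi : ℝ} {La Lb : ℝ → ℝ} {y : Vec Q} {q : QI Q}
    {δ : ℝ × ℝ} (hδ : δ ∈ Aset dlo dhi)
    (hmax : IsMaxOn (fun δ => Ham σ γ η La Lb y δ q) (Aset dlo dhi) δ) :
    H0 σ γ η dlo dhi La Lb y q = Ham σ γ η La Lb y δ q :=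
  have : Nonempty (Aset dlo dhi) := ⟨⟨δ, hδ⟩⟩
  le_antisymm (ciSup_le fun ζ => hmax ζ.2)
    (le_ciSup (f := fun ζ : Aset dlo dhi => Ham σ γ η La Lb y ζ.1 q)
      ⟨_, Set.forall_mem_range.2 fun ζ => hmax ζ.2⟩ ⟨δ, hδ⟩)

theorem H0_sub_Hlam_le {Q : ℕ} {σ γ η dlo dhi mlo : ℝ} {La Lb : ℝ → ℝ}
    {ν : Measure (ℝ × ℝ)} [IsProbabilityMeasure ν] {m : ℝ × ℝ → ℝ} (hd : dlo < dhi)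
    (hmlo : 0 < mlo) (hm : ∀ᵐ δ ∂(volume.restrict (Aset dlo dhi)), mlo ≤ m δ)
    (hν : ν = (volume.restrict (Aset dlo dhi)).withDensity fun δ => ENNReal.ofReal (m δ))
    {y : Vec Q} {q : QI Q} {K : NNReal}
    (hg : LipschitzOnWith K (fun δ => Ham σ γ η La Lb y δ q) (Aset dlo dhi))
    {lam : ℝ} (hlam : 0 < lam) (hlam1 : lam ≤ 1) :
    0 ≤ H0 σ γ η dlo dhi La Lb y q - Hlam σ γ η La Lb ν lam y q ∧
      H0 σ γ η dlo dhi La Lb y q - Hlam σ γ η La Lb ν lam y q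
        ≤ K * (lam * (dhi - dlo)) - lam * Real.log (mlo * (lam * (dhi - dlo)) ^ 2) := by
  have hA : IsCompact (Aset dlo dhi) := isCompact_Icc.prod isCompact_Icc
  obtain ⟨δs, hδs, hmax⟩ := hA.exists_isMaxOn ⟨(dlo, dlo), ⟨⟨le_rfl, hd.le⟩, ⟨le_rfl, hd.le⟩⟩⟩
    hg.continuousOn
  have hH0 := H0_eq_of_isMaxOn hδs hmax
  have hAae : ∀ᵐ δ ∂ν, δ ∈ Aset dlo dhi := by
    rw [hν]
    exact (withDensity_absolutelyContinuous _ _).ae_le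
      (ae_restrict_mem (measurableSet_Icc.prod measurableSet_Icc))
  have hint : Integrable (fun δ => Real.exp (Ham σ γ η La Lb y δ q / lam)) ν :=
    Integrable.of_continuousOn_of_ae_mem hA
      (Real.continuous_exp.comp_continuousOn (hg.continuousOn.div_const lam)) hAae
  refine ⟨sub_nonneg.2 (mul_log_integral_exp_div_le hlam (hAae.mono fun δ hδ => hH0 ▸ hmax hδ)
    hint), ?_⟩
  set r := lam * (dhi - dlo)
  have hr : 0 < r := mul_pos hlam (sub_pos.2 hd)
  obtain ⟨a, b, hS⟩ := exists_box_subset_aset_inter_closedBall hδs hr.le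
    (mul_le_of_le_one_left (sub_pos.2 hd).le hlam1)
  have hνS := mul_sq_le_measureReal_box hmlo.le hν hm hr.le
    (hS.trans Set.inter_subset_left)
  calc H0 σ γ η dlo dhi La Lb y q - Hlam σ γ η La Lb ν lam y q
      ≤ K * r - lam * Real.log (ν.real (Set.Icc a (a + r) ×ˢ Set.Icc b (b + r))) :=
        sub_mul_log_integral_exp_div_le hlam (measurableSet_Icc.prod measurableSet_Icc)
          ((by positivity : (0 : ℝ) < mlo * r ^ 2).trans_le hνS)
          (fun δ hδ => hH0 ▸ hg.sub_mul_le_of_dist_le (hS hδ).1 hδs (hS hδ).2) hint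
    _ ≤ K * r - lam * Real.log (mlo * r ^ 2) := by gcongr

theorem entropy_bias_general
    (Q : ℕ) (σ γ η dlo dhi mlo mhi : ℝ)
    (La Lb : ℝ → ℝ) (ν : Measure (ℝ × ℝ)) (m : ℝ × ℝ → ℝ)
    (hd : dlo < dhi)
    (hLa : ContDiffOn ℝ 1 La (Set.Icc dlo dhi)) (hLb : ContDiffOn ℝ 1 Lb (Set.Icc dlo dhi))
    (hmlo : 0 < mlo)
    (hm_bd : ∀ᵐ δ ∂(volume.restrict (Aset dlo dhi)), mlo ≤ m δ ∧ m δ ≤ mhi)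
    (hν : ν = (volume.restrict (Aset dlo dhi)).withDensity fun δ => ENNReal.ofReal (m δ))
    (hνprob : IsProbabilityMeasure ν)
    (B : ℝ) (hB : 0 < B) :
    ∃ C > (0 : ℝ),
      ∀ lam : ℝ, 0 < lam → lam ≤ 1 →
        ∀ y : Vec Q, (∀ q : QI Q, |y q| ≤ B) →
          ∀ q : QI Q,
            0 ≤ H0 σ γ η dlo dhi La Lb y q - Hlam σ γ η La Lb ν lam y q ∧
            H0 σ γ η dlo dhi La Lb y q - Hlam σ γ η La Lb ν lam y q
              ≤ C * lam * (1 + |Real.log lam|) := by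
  obtain ⟨K, hK⟩ := exists_lipschitzOnWith_ham (Q := Q) σ γ η hLa hLb hB.le
  have hℓ : 0 < dhi - dlo := sub_pos.2 hd
  refine ⟨2 + K * (dhi - dlo) + |Real.log mlo| + 2 * |Real.log (dhi - dlo)|, by positivity, ?_⟩
  intro lam hlam hlam1 y hy q
  obtain ⟨hnonneg, hgap⟩ := H0_sub_Hlam_le hd hmlo (hm_bd.mono fun _ h => h.1) hν (hK y hy q) hlam
    hlam1
  exact ⟨hnonneg, hgap.trans (mul_sub_mul_log_mul_sq_le K.2 hℓ hmlo hlam)⟩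

/-- entropy bias. -/
theorem entropy_bias
    (T : ℝ) (Q : ℕ) (σ γ Φ η dlo dhi Lbar mlo mhi : ℝ)
    (La Lb : ℝ → ℝ) (ν : Measure (ℝ × ℝ)) (m : ℝ × ℝ → ℝ)
    (hT : 0 < T) (hσ : 0 < σ) (hγ : 0 < γ) (hΦ : 0 ≤ Φ) (hη : 0 ≤ η) (hd : dlo < dhi)
    (hLa : ContDiffOn ℝ 1 La (Set.Icc dlo dhi)) (hLb : ContDiffOn ℝ 1 Lb (Set.Icc dlo dhi))
    (hLa_bd : ∀ x ∈ Set.Icc dlo dhi, 0 ≤ La x ∧ La x ≤ Lbar)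
    (hLb_bd : ∀ x ∈ Set.Icc dlo dhi, 0 ≤ Lb x ∧ Lb x ≤ Lbar)
    (hm : Measurable m) (hmlo : 0 < mlo) (hmhi : mlo ≤ mhi)
    (hm_bd : ∀ᵐ δ ∂(volume.restrict (Aset dlo dhi)), mlo ≤ m δ ∧ m δ ≤ mhi)
    (hν : ν = (volume.restrict (Aset dlo dhi)).withDensity fun δ => ENNReal.ofReal (m δ))
    (hνprob : IsProbabilityMeasure ν)
    (B : ℝ) (hB : 0 < B) :
    ∃ C > (0 : ℝ),
      ∀ lam : ℝ, 0 < lam → lam ≤ 1 →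
        ∀ y : Vec Q, (∀ q : QI Q, |y q| ≤ B) →
          ∀ q : QI Q,
            0 ≤ H0 σ γ η dlo dhi La Lb y q - Hlam σ γ η La Lb ν lam y q ∧
            H0 σ γ η dlo dhi La Lb y q - Hlam σ γ η La Lb ν lam y q
              ≤ C * lam * (1 + |Real.log lam|) :=
  entropy_bias_general Q σ γ η dlo dhi mlo mhi La Lb ν m hd hLa hLb hmlo hm_bd hν hνprob B hB

end MM
end
end

section
/- (One-step risk-sensitive consistency.) Fix B>0. There exist h₀>0 and a structural constant C<∞ (also depending on B) such that for every 0<h≤h₀: (i) sup over all φ∈ℝ^{2Q+1} with ‖φ‖_∞≤B, all q∈𝒬 and all δ∈A of |C_h^δφ(q) − φ_q − h·H_q(φ,δ)| ≤ Ch²; and consequently (ii) for every 0<λ≤1 and every φ with ‖φ‖_∞≤B, ‖T_h^λφ − (φ + h·H^λ(φ))‖_∞ ≤ Ch². -/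
/-!
The generator identity `K^δ e^{-γφ} = -γ H(φ, δ) e^{-γφ}` says that the first-order term of
`exp (h K^δ) = 1 + h K^δ + O(h²)`, applied to `e^{-γφ}`, is exactly the Hamiltonian. Since
`e^{-γφ}` stays in `[e^{-γB}, e^{γB}]` and `{K^δ | δ ∈ A}` is compact, taking `-(1/γ) log`
of this expansion gives (i) uniformly in `φ`, `q` and `δ`. For (ii), the soft maximum
`f ↦ τ log ∫ exp (f / τ) dν` is monotone and commutes with adding constants, hence is
1-Lipschitz for the sup norm, so the bound of (i) passes through it unchanged.
-/

open MeasureTheory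
open scoped Classical

noncomputable section

namespace MM

open Real in
theorem abs_log_one_add_sub_self_le {t : ℝ} (ht : |t| ≤ 1 / 2) : |log (1 + t) - t| ≤ 2 * t ^ 2 := by
  have h := Real.abs_log_sub_add_sum_range_le (x := -t) (by rw [abs_neg]; linarith) 1
  simp only [Finset.sum_range_one, pow_one, zero_add, sub_neg_eq_add, abs_neg] at h
  calc |log (1 + t) - t| ≤ |t| ^ 2 / (1 - |t|) := by
        convert h using 2; ring
    _ ≤ t ^ 2 / (1 / 2) := by
        rw [sq_abs]; exact div_le_div_of_nonneg_left (sq_nonneg t) (by norm_num) (by linarith)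
    _ = 2 * t ^ 2 := by ring

open Real in
theorem abs_log_sub_log_sub_div_le {a s d : ℝ} (ha : 0 < a) (hs : |s - a| ≤ a / 2) :
    |log s - log a - d / a| ≤ 2 * ((s - a) / a) ^ 2 + |s - a - d| / a := by
  set t := (s - a) / a
  have ht : |t| ≤ 1 / 2 := by
    rw [abs_div, abs_of_pos ha, div_le_iff₀ ha]; linarith
  have hst : s = a * (1 + t) := by
    rw [mul_add, mul_one, mul_div_cancel₀ _ ha.ne']; ring
  have h1t : 0 < 1 + t := by linarith [neg_abs_le t]
  have hsplit : log s - log a - d / a = (log (1 + t) - t) + (s - a - d) / a := by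
    rw [hst, log_mul ha.ne' h1t.ne']; field_simp; ring
  rw [hsplit]
  refine (abs_add_le _ _).trans (add_le_add (abs_log_one_add_sub_self_le ht) ?_)
  rw [abs_div, abs_of_pos ha]

open NormedSpace in
theorem norm_exp_sub_one_sub_le {𝔸 : Type*} [NormedRing 𝔸] [NormedAlgebra ℝ 𝔸]
    [CompleteSpace 𝔸] (x : 𝔸) : ‖exp x - 1 - x‖ ≤ ‖x‖ ^ 2 * Real.exp ‖x‖ := by
  have hx : HasSum (fun k => ((k + 2).factorial⁻¹ : ℝ) • x ^ (k + 2)) (exp x - 1 - x) := by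
    simpa [Finset.sum_range_succ, sub_sub] using
      (hasSum_nat_add_iff' 2).2 (exp_series_hasSum_exp' (𝕂 := ℝ) x)
  have hbound : HasSum (fun k => ‖x‖ ^ 2 * (‖x‖ ^ k / k.factorial)) (‖x‖ ^ 2 * Real.exp ‖x‖) := by
    rw [Real.exp_eq_exp_ℝ]
    exact (expSeries_div_hasSum_exp ‖x‖).mul_left _
  rw [← hx.tsum_eq]
  refine tsum_of_norm_bounded hbound fun k => ?_
  rw [norm_smul, Real.norm_eq_abs, abs_of_pos (by positivity)]
  calc ((k + 2).factorial⁻¹ : ℝ) * ‖x ^ (k + 2)‖ ≤ (k.factorial⁻¹ : ℝ) * ‖x‖ ^ (k + 2) := by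
        have hfac : (k.factorial : ℝ) ≤ (k + 2).factorial := by
          exact_mod_cast Nat.factorial_le (by omega)
        exact mul_le_mul (inv_anti₀ (by positivity) hfac) (norm_pow_le' x (by omega))
          (norm_nonneg _) (by positivity)
    _ = ‖x‖ ^ 2 * (‖x‖ ^ k / k.factorial) := by ring

open scoped Matrix

section LinftyOpNorm

-- Any submultiplicative norm would do; the ℓ∞ operator norm is the one that pairs with the sup
-- norm of vectors in `Matrix.linfty_opNorm_mulVec`.
attribute [local instance] Matrix.linftyOpNormedAddCommGroup Matrix.linftyOpNormedRing
  Matrix.linftyOpNormedAlgebra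

variable {n : Type*} [Fintype n] [DecidableEq n]

theorem matExp_eq_exp (M : Matrix n n ℝ) : matExp M = NormedSpace.exp M := by
  ext i j
  rw [NormedSpace.exp_eq_tsum ℝ]
  exact ((NormedSpace.expSeries_summable' (𝕂 := ℝ) M).hasSum.map
    (Matrix.entryAddMonoidHom ℝ i j) (continuous_apply_apply i j)).tsum_eq

theorem ContinuousOn.matExp {X : Type*} [TopologicalSpace X] {M : X → Matrix n n ℝ}
    {s : Set X} (hM : ContinuousOn M s) : ContinuousOn (fun x => matExp (M x)) s := by
  simp only [matExp_eq_exp]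
  exact NormedSpace.exp_continuous.comp_continuousOn hM

theorem abs_matExp_smul_mulVec_apply_sub_le {K : Matrix n n ℝ} {u : n → ℝ} {c ub h : ℝ}
    (hK : ‖K‖ ≤ c) (hu : ‖u‖ ≤ ub) (h0 : 0 ≤ h) (h1 : h ≤ 1) (i : n) :
    |(matExp (h • K) *ᵥ u) i - u i - h * (K *ᵥ u) i| ≤ c ^ 2 * Real.exp c * ub * h ^ 2 := by
  have hrw : matExp (h • K) *ᵥ u - u - h • (K *ᵥ u)
      = (NormedSpace.exp (h • K) - 1 - h • K) *ᵥ u := by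
    rw [matExp_eq_exp, Matrix.sub_mulVec, Matrix.sub_mulVec, Matrix.one_mulVec,
      Matrix.smul_mulVec]
  have hhK : h * ‖K‖ ≤ c := (mul_le_of_le_one_left (norm_nonneg _) h1).trans hK
  have hub : 0 ≤ ub := (norm_nonneg _).trans hu
  calc |(matExp (h • K) *ᵥ u) i - u i - h * (K *ᵥ u) i|
      = ‖(matExp (h • K) *ᵥ u - u - h • (K *ᵥ u)) i‖ := rfl
    _ ≤ ‖NormedSpace.exp (h • K) - 1 - h • K‖ * ‖u‖ :=
        hrw ▸ (norm_le_pi_norm _ i).trans (Matrix.linfty_opNorm_mulVec _ _)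
    _ ≤ ‖h • K‖ ^ 2 * Real.exp ‖h • K‖ * ub := by gcongr; exact norm_exp_sub_one_sub_le _
    _ = h ^ 2 * ‖K‖ ^ 2 * Real.exp (h * ‖K‖) * ub := by
        rw [norm_smul, Real.norm_of_nonneg h0]; ring
    _ ≤ h ^ 2 * c ^ 2 * Real.exp c * ub := by gcongr
    _ = c ^ 2 * Real.exp c * ub * h ^ 2 := by ring

theorem exists_log_matExp_mulVec_expansion {S : Set (Matrix n n ℝ)} (hS : IsCompact S)
    {lb ub : ℝ} (hlb : 0 < lb) (hlbub : lb ≤ ub) :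
    ∃ h₀ > 0, ∃ C, ∀ h, 0 < h → h ≤ h₀ → ∀ K ∈ S, ∀ u : n → ℝ, (∀ j, lb ≤ u j ∧ u j ≤ ub) →
      ∀ i, 0 < (matExp (h • K) *ᵥ u) i ∧
        |Real.log ((matExp (h • K) *ᵥ u) i) - Real.log (u i) - h * (K *ᵥ u) i / u i|
          ≤ C * h ^ 2 := by
  obtain ⟨c, hc, hSc⟩ := hS.isBounded.exists_pos_norm_le
  have hub : 0 ≤ ub := hlb.le.trans hlbub
  set E := c ^ 2 * Real.exp c * ub
  set D := c * ub + E
  have hD : 0 ≤ D := by positivity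
  -- `h₀` keeps `|s - u i| ≤ u i / 2`, the range of `abs_log_sub_log_sub_div_le`.
  refine ⟨min 1 (lb / (2 * D + 1)), by positivity, 2 * (D / lb) ^ 2 + E / lb, ?_⟩
  intro h hh hh₀ K hKS u hu i
  have hK := hSc K hKS
  have hub' : ‖u‖ ≤ ub := (pi_norm_le_iff_of_nonneg hub).2 fun j => by
    rw [Real.norm_of_nonneg (hlb.le.trans (hu j).1)]; exact (hu j).2
  set s := (matExp (h • K) *ᵥ u) i
  set d := h * (K *ᵥ u) i
  have ha : 0 < u i := hlb.trans_le (hu i).1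
  have hh1 : h ≤ 1 := hh₀.trans (min_le_left _ _)
  have hhD : h * D ≤ lb / 2 := by
    have := (le_div_iff₀ (by positivity)).1 (hh₀.trans (min_le_right _ _))
    nlinarith
  have hR : |s - u i - d| ≤ E * h ^ 2 :=
    abs_matExp_smul_mulVec_apply_sub_le hK hub' hh.le hh1 i
  have hd : |d| ≤ h * (c * ub) := by
    rw [abs_mul, abs_of_pos hh, ← Real.norm_eq_abs]
    gcongr
    exact (norm_le_pi_norm _ i).trans ((Matrix.linfty_opNorm_mulVec K u).trans (by gcongr))
  have hsa : |s - u i| ≤ h * D := by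
    have h2 : h ^ 2 ≤ h := by nlinarith
    calc |s - u i| = |(s - u i - d) + d| := by ring_nf
      _ ≤ E * h ^ 2 + h * (c * ub) := (abs_add_le _ _).trans (add_le_add hR hd)
      _ ≤ h * D := by nlinarith [show 0 ≤ E by positivity]
  have hsa' : |s - u i| ≤ u i / 2 := by linarith [(hu i).1]
  refine ⟨by linarith [(abs_le.1 hsa').1], ?_⟩
  calc |Real.log s - Real.log (u i) - d / u i|
      ≤ 2 * ((s - u i) / u i) ^ 2 + |s - u i - d| / u i := abs_log_sub_log_sub_div_le ha hsa'
    _ ≤ 2 * (h * D / lb) ^ 2 + E * h ^ 2 / lb := by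
        rw [← sq_abs, abs_div, abs_of_pos ha]
        gcongr <;> exact (hu i).1
    _ = (2 * (D / lb) ^ 2 + E / lb) * h ^ 2 := by ring

end LinftyOpNorm

section LogIntegralExp

open Real

variable {α : Type*} [MeasurableSpace α] {μ : Measure α} [NeZero μ] {f g : α → ℝ} {τ : ℝ}

theorem mul_log_integral_exp_le_add {ε : ℝ} (hτ : 0 < τ)
    (hf : Integrable (fun x => exp (f x / τ)) μ) (hg : Integrable (fun x => exp (g x / τ)) μ)
    (hfg : ∀ᵐ x ∂μ, f x ≤ g x + ε) :
    τ * log (∫ x, exp (f x / τ) ∂μ) ≤ τ * log (∫ x, exp (g x / τ) ∂μ) + ε := by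
  have hmono : ∫ x, exp (f x / τ) ∂μ ≤ exp (ε / τ) * ∫ x, exp (g x / τ) ∂μ := by
    rw [← integral_const_mul]
    refine integral_mono_ae hf (hg.const_mul _) (hfg.mono fun x hx => ?_)
    simp only [← exp_add, exp_le_exp, ← add_div]
    exact div_le_div_of_nonneg_right (by linarith) hτ.le
  have hlog := log_le_log (integral_exp_pos hf) hmono
  rw [log_mul (exp_pos _).ne' (integral_exp_pos hg).ne', log_exp] at hlog
  calc τ * log (∫ x, exp (f x / τ) ∂μ) ≤ τ * (ε / τ + log (∫ x, exp (g x / τ) ∂μ)) := by gcongr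
    _ = τ * log (∫ x, exp (g x / τ) ∂μ) + ε := by field_simp; ring

theorem abs_mul_log_integral_exp_sub_le {ε : ℝ} (hτ : 0 < τ)
    (hf : Integrable (fun x => exp (f x / τ)) μ) (hg : Integrable (fun x => exp (g x / τ)) μ)
    (hfg : ∀ᵐ x ∂μ, |f x - g x| ≤ ε) :
    |τ * log (∫ x, exp (f x / τ) ∂μ) - τ * log (∫ x, exp (g x / τ) ∂μ)| ≤ ε := by
  have hle := mul_log_integral_exp_le_add hτ hf hg (hfg.mono fun x hx => by
    linarith [(abs_le.1 hx).2])
  have hge := mul_log_integral_exp_le_add hτ hg hf (hfg.mono fun x hx => by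
    linarith [(abs_le.1 hx).1])
  exact abs_sub_le_iff.2 ⟨by linarith, by linarith⟩

theorem mul_log_integral_exp_const_add (hτ : τ ≠ 0)
    (hg : Integrable (fun x => exp (g x / τ)) μ) (a : ℝ) :
    τ * log (∫ x, exp ((a + g x) / τ) ∂μ) = a + τ * log (∫ x, exp (g x / τ) ∂μ) := by
  simp_rw [add_div, exp_add, integral_const_mul]
  rw [log_mul (exp_pos _).ne' (integral_exp_pos hg).ne', log_exp]
  field_simp

end LogIntegralExp

theorem integrable_of_continuousOn_of_ae_mem {α E : Type*} [TopologicalSpace α] [T2Space α]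
    [MeasurableSpace α] [OpensMeasurableSpace α] [NormedAddCommGroup E] {μ : Measure α}
    [IsFiniteMeasure μ] {s : Set α} {f : α → E} (hs : IsCompact s) (hμs : ∀ᵐ x ∂μ, x ∈ s)
    (hf : ContinuousOn f s) : Integrable f μ := by
  rw [← Measure.restrict_eq_self_of_ae_mem hμs]
  exact hf.integrableOn_compact hs

section Model

open Real

variable {Q : ℕ} {σ γ η dlo dhi : ℝ} {La Lb : ℝ → ℝ}

theorem sum_ite_val_eq_mul_ext (u : Vec Q) (z : ℤ) (a : ℝ) :
    ∑ j : QI Q, (if j.1 = z then a else 0) * u j = a * ext u z := by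
  unfold ext
  split_ifs with hz
  · rw [Finset.sum_eq_single ⟨z, hz⟩ (fun j _ hj => by
      rw [if_neg fun h => hj (Subtype.ext h), zero_mul]) (by simp)]
    simp
  · rw [mul_zero]
    exact Finset.sum_eq_zero fun j _ => by rw [if_neg fun h : j.1 = z => hz (h ▸ j.2), zero_mul]

theorem Kmat_mulVec_apply (δ : ℝ × ℝ) (u : Vec Q) (i : QI Q) :
    (Kmat Q σ γ η La Lb δ *ᵥ u) i
      = (γ ^ 2 * σ ^ 2 / 2 * (i.1 : ℝ) ^ 2 + γ * η * (i.1 : ℝ) ^ 2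
          - Lqa La i δ.1 - Lqb Lb i δ.2) * u i
        + Lqa La i δ.1 * exp (-γ * δ.1) * ext u (i.1 - 1)
        + Lqb Lb i δ.2 * exp (-γ * δ.2) * ext u (i.1 + 1) := by
  simp only [Matrix.mulVec, dotProduct, Kmat, add_mul, Finset.sum_add_distrib,
    sum_ite_val_eq_mul_ext]
  simp [ite_mul]

theorem Lqa_mul_exp_DelA (φ : Vec Q) (δ : ℝ × ℝ) (i : QI Q) :
    Lqa La i δ.1 * (exp (-γ * DelA φ δ i) * exp (-γ * φ i))
      = Lqa La i δ.1 * exp (-γ * δ.1) * ext (fun r => exp (-γ * φ r)) (i.1 - 1) := by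
  unfold Lqa DelA
  split_ifs with hi
  · have hmem : i.1 - 1 ∈ Finset.Icc (-(Q : ℤ)) Q := by
      have := Finset.mem_Icc.1 i.2; rw [Finset.mem_Icc]; omega
    simp only [ext, dif_pos hmem, mul_assoc, ← exp_add]
    ring_nf
  · simp

theorem Lqb_mul_exp_DelB (φ : Vec Q) (δ : ℝ × ℝ) (i : QI Q) :
    Lqb Lb i δ.2 * (exp (-γ * DelB φ δ i) * exp (-γ * φ i))
      = Lqb Lb i δ.2 * exp (-γ * δ.2) * ext (fun r => exp (-γ * φ r)) (i.1 + 1) := by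
  unfold Lqb DelB
  split_ifs with hi
  · have hmem : i.1 + 1 ∈ Finset.Icc (-(Q : ℤ)) Q := by
      have := Finset.mem_Icc.1 i.2; rw [Finset.mem_Icc]; omega
    simp only [ext, dif_pos hmem, mul_assoc, ← exp_add]
    ring_nf
  · simp

theorem Kmat_mulVec_exp_neg (hγ : γ ≠ 0) (δ : ℝ × ℝ) (φ : Vec Q) (i : QI Q) :
    (Kmat Q σ γ η La Lb δ *ᵥ fun r => exp (-γ * φ r)) i
      = -γ * Ham σ γ η La Lb φ δ i * exp (-γ * φ i) := by
  rw [Kmat_mulVec_apply, ← Lqa_mul_exp_DelA, ← Lqb_mul_exp_DelB]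
  simp only [Ham]
  field_simp
  ring

theorem isCompact_Aset : IsCompact (Aset dlo dhi) :=
  isCompact_Icc.prod isCompact_Icc

theorem continuousOn_Lqa (hLa : ContinuousOn La (Set.Icc dlo dhi)) (q : QI Q) :
    ContinuousOn (fun δ : ℝ × ℝ => Lqa La q δ.1) (Aset dlo dhi) := by
  unfold Lqa
  split_ifs
  · exact hLa.comp continuous_fst.continuousOn fun δ hδ => hδ.1
  · exact continuousOn_const

theorem continuousOn_Lqb (hLb : ContinuousOn Lb (Set.Icc dlo dhi)) (q : QI Q) :
    ContinuousOn (fun δ : ℝ × ℝ => Lqb Lb q δ.2) (Aset dlo dhi) := by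
  unfold Lqb
  split_ifs
  · exact hLb.comp continuous_snd.continuousOn fun δ hδ => hδ.2
  · exact continuousOn_const

theorem continuousOn_Kmat (hLa : ContinuousOn La (Set.Icc dlo dhi))
    (hLb : ContinuousOn Lb (Set.Icc dlo dhi)) :
    ContinuousOn (Kmat Q σ γ η La Lb) (Aset dlo dhi) := by
  refine continuousOn_pi.2 fun i => continuousOn_pi.2 fun j => ?_
  have ha := continuousOn_Lqa hLa i
  have hb := continuousOn_Lqb hLb i
  simp only [Kmat]
  split_ifs <;> fun_prop

theorem continuousOn_Ham (hLa : ContinuousOn La (Set.Icc dlo dhi))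
    (hLb : ContinuousOn Lb (Set.Icc dlo dhi)) (φ : Vec Q) (q : QI Q) :
    ContinuousOn (fun δ => Ham σ γ η La Lb φ δ q) (Aset dlo dhi) := by
  have ha := continuousOn_Lqa hLa q
  have hb := continuousOn_Lqb hLb q
  have hA : Continuous fun δ => DelA φ δ q := by unfold DelA; split_ifs <;> fun_prop
  have hB : Continuous fun δ => DelB φ δ q := by unfold DelB; split_ifs <;> fun_prop
  unfold Ham
  fun_prop

theorem continuousOn_CE (hLa : ContinuousOn La (Set.Icc dlo dhi))
    (hLb : ContinuousOn Lb (Set.Icc dlo dhi)) (h : ℝ) (φ : Vec Q) (q : QI Q)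
    (hpos : ∀ δ ∈ Aset dlo dhi,
      0 < (matExp (h • Kmat Q σ γ η La Lb δ) *ᵥ fun r => exp (-γ * φ r)) q) :
    ContinuousOn (fun δ => CE σ γ η La Lb h δ φ q) (Aset dlo dhi) := by
  have hS : ContinuousOn
      (fun δ => (matExp (h • Kmat Q σ γ η La Lb δ) *ᵥ fun r => exp (-γ * φ r)) q)
      (Aset dlo dhi) :=
    ((continuous_apply q).comp (continuous_id.matrix_mulVec continuous_const)).comp_continuousOn
      (ContinuousOn.matExp (M := fun δ => h • Kmat Q σ γ η La Lb δ)
        ((continuousOn_Kmat hLa hLb).const_smul h))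
  exact continuousOn_const.mul (hS.log fun δ hδ => (hpos δ hδ).ne')

theorem exists_CE_expansion (hγ : 0 < γ) (hLa : ContinuousOn La (Set.Icc dlo dhi))
    (hLb : ContinuousOn Lb (Set.Icc dlo dhi)) {B : ℝ} (hB : 0 ≤ B) :
    ∃ h₀ > 0, ∃ C, ∀ h, 0 < h → h ≤ h₀ → ∀ φ : Vec Q, (∀ r, |φ r| ≤ B) →
      ∀ q, ∀ δ ∈ Aset dlo dhi,
        0 < (matExp (h • Kmat Q σ γ η La Lb δ) *ᵥ fun r => exp (-γ * φ r)) q ∧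
        |CE σ γ η La Lb h δ φ q - φ q - h * Ham σ γ η La Lb φ δ q| ≤ C * h ^ 2 := by
  obtain ⟨h₀, hh₀, C, hC⟩ := exists_log_matExp_mulVec_expansion
    (isCompact_Aset.image_of_continuousOn (continuousOn_Kmat (σ := σ) (γ := γ) (η := η) hLa hLb))
    (exp_pos (-(γ * B))) (ub := exp (γ * B)) (exp_le_exp.2 (by nlinarith))
  refine ⟨h₀, hh₀, C / γ, fun h hh hhh φ hφ q δ hδ => ?_⟩
  set u : Vec Q := fun r => exp (-γ * φ r)
  have hu : ∀ j, exp (-(γ * B)) ≤ u j ∧ u j ≤ exp (γ * B) := fun j => by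
    have := abs_le.1 (hφ j)
    constructor <;> exact exp_le_exp.2 (by nlinarith)
  obtain ⟨hpos, hbound⟩ := hC h hh hhh _ ⟨δ, hδ, rfl⟩ u hu q
  refine ⟨hpos, ?_⟩
  have hKu : h * (Kmat Q σ γ η La Lb δ *ᵥ u) q / u q = -γ * (h * Ham σ γ η La Lb φ δ q) := by
    have huq : 0 < u q := exp_pos _
    rw [Kmat_mulVec_exp_neg hγ.ne']
    change h * (-γ * Ham σ γ η La Lb φ δ q * u q) / u q = _
    field_simp
  have hCE : CE σ γ η La Lb h δ φ q - φ q - h * Ham σ γ η La Lb φ δ q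
      = -(1 / γ) * (log ((matExp (h • Kmat Q σ γ η La Lb δ) *ᵥ u) q) - log (u q)
          - h * (Kmat Q σ γ η La Lb δ *ᵥ u) q / u q) := by
    change -(1 / γ) * log ((matExp (h • Kmat Q σ γ η La Lb δ) *ᵥ u) q) - φ q - _ = _
    rw [hKu, show log (u q) = -γ * φ q from log_exp _]
    field_simp
    ring
  rw [hCE, abs_mul, abs_neg, abs_of_pos (one_div_pos.2 hγ)]
  calc 1 / γ * |log ((matExp (h • Kmat Q σ γ η La Lb δ) *ᵥ u) q) - log (u q)
          - h * (Kmat Q σ γ η La Lb δ *ᵥ u) q / u q|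
      ≤ 1 / γ * (C * h ^ 2) := by gcongr
    _ = C / γ * h ^ 2 := by ring

theorem abs_Top_sub_le {ν : Measure (ℝ × ℝ)} [IsFiniteMeasure ν] [NeZero ν]
    {s : Set (ℝ × ℝ)} (hs : IsCompact s) (hνs : ∀ᵐ δ ∂ν, δ ∈ s) {h lam ε : ℝ} (hh : 0 < h)
    (hlam : 0 < lam) {φ : Vec Q} {q : QI Q}
    (hCE : ContinuousOn (fun δ => CE σ γ η La Lb h δ φ q) s)
    (hHam : ContinuousOn (fun δ => Ham σ γ η La Lb φ δ q) s)
    (hε : ∀ δ ∈ s, |CE σ γ η La Lb h δ φ q - φ q - h * Ham σ γ η La Lb φ δ q| ≤ ε) :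
    |Top σ γ η La Lb ν h lam φ q - (φ q + h * Hlam σ γ η La Lb ν lam φ q)| ≤ ε := by
  have hτ : 0 < h * lam := mul_pos hh hlam
  have hint : ∀ f : ℝ × ℝ → ℝ, ContinuousOn f s →
      Integrable (fun δ => exp (f δ / (h * lam))) ν := fun f hf =>
    integrable_of_continuousOn_of_ae_mem hs hνs
      (continuous_exp.comp_continuousOn (hf.div_const _))
  have hHlam : φ q + h * Hlam σ γ η La Lb ν lam φ q
      = h * lam * log (∫ δ, exp ((φ q + h * Ham σ γ η La Lb φ δ q) / (h * lam)) ∂ν) := by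
    rw [mul_log_integral_exp_const_add (g := fun δ => h * Ham σ γ η La Lb φ δ q) hτ.ne'
      (hint _ (continuousOn_const.mul hHam))]
    simp only [Hlam, mul_div_mul_left _ _ hh.ne']
    ring
  rw [hHlam]
  exact abs_mul_log_integral_exp_sub_le hτ (hint _ hCE)
    (hint (fun δ => φ q + h * Ham σ γ η La Lb φ δ q)
      (continuousOn_const.add (continuousOn_const.mul hHam)))
    (hνs.mono fun δ hδ => by rw [← sub_sub]; exact hε δ hδ)

end Model

theorem one_step_consistency_general
    (Q : ℕ) (σ γ η dlo dhi : ℝ)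
    (La Lb : ℝ → ℝ) (ν : Measure (ℝ × ℝ)) (m : ℝ × ℝ → ℝ)
    (hγ : 0 < γ)
    (hLa : ContDiffOn ℝ 1 La (Set.Icc dlo dhi)) (hLb : ContDiffOn ℝ 1 Lb (Set.Icc dlo dhi))
    (hν : ν = (volume.restrict (Aset dlo dhi)).withDensity fun δ => ENNReal.ofReal (m δ))
    (hνprob : IsProbabilityMeasure ν)
    (B : ℝ) (hB : 0 < B) :
    ∃ h₀ > (0 : ℝ), ∃ C : ℝ,
      ∀ h : ℝ, 0 < h → h ≤ h₀ →
        ∀ φ : Vec Q, (∀ r : QI Q, |φ r| ≤ B) →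
          (∀ q : QI Q, ∀ δ ∈ Aset dlo dhi,
            |CE σ γ η La Lb h δ φ q - φ q - h * Ham σ γ η La Lb φ δ q| ≤ C * h ^ 2) ∧
          (∀ lam : ℝ, 0 < lam → lam ≤ 1 → ∀ q : QI Q,
            |Top σ γ η La Lb ν h lam φ q - (φ q + h * Hlam σ γ η La Lb ν lam φ q)|
              ≤ C * h ^ 2) := by
  obtain ⟨h₀, hh₀, C, hC⟩ :=
    exists_CE_expansion (Q := Q) (σ := σ) (η := η) hγ hLa.continuousOn hLb.continuousOn hB.le
  have hνA : ∀ᵐ δ ∂ν, δ ∈ Aset dlo dhi := by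
    rw [hν]
    exact (withDensity_absolutelyContinuous _ _).ae_le
      (ae_restrict_mem (measurableSet_Icc.prod measurableSet_Icc))
  refine ⟨h₀, hh₀, C, fun h hh hhh φ hφ =>
    ⟨fun q δ hδ => (hC h hh hhh φ hφ q δ hδ).2, fun lam hlam _ q => ?_⟩⟩
  exact abs_Top_sub_le isCompact_Aset hνA hh hlam
    (continuousOn_CE hLa.continuousOn hLb.continuousOn h φ q fun δ hδ =>
      (hC h hh hhh φ hφ q δ hδ).1)
    (continuousOn_Ham hLa.continuousOn hLb.continuousOn φ q)
    fun δ hδ => (hC h hh hhh φ hφ q δ hδ).2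

/-- one-step risk-sensitive consistency. -/
theorem one_step_consistency
    (T : ℝ) (Q : ℕ) (σ γ Φ η dlo dhi Lbar mlo mhi : ℝ)
    (La Lb : ℝ → ℝ) (ν : Measure (ℝ × ℝ)) (m : ℝ × ℝ → ℝ)
    (hT : 0 < T) (hσ : 0 < σ) (hγ : 0 < γ) (hΦ : 0 ≤ Φ) (hη : 0 ≤ η) (hd : dlo < dhi)
    (hLa : ContDiffOn ℝ 1 La (Set.Icc dlo dhi)) (hLb : ContDiffOn ℝ 1 Lb (Set.Icc dlo dhi))
    (hLa_bd : ∀ x ∈ Set.Icc dlo dhi, 0 ≤ La x ∧ La x ≤ Lbar)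
    (hLb_bd : ∀ x ∈ Set.Icc dlo dhi, 0 ≤ Lb x ∧ Lb x ≤ Lbar)
    (hm : Measurable m) (hmlo : 0 < mlo) (hmhi : mlo ≤ mhi)
    (hm_bd : ∀ᵐ δ ∂(volume.restrict (Aset dlo dhi)), mlo ≤ m δ ∧ m δ ≤ mhi)
    (hν : ν = (volume.restrict (Aset dlo dhi)).withDensity fun δ => ENNReal.ofReal (m δ))
    (hνprob : IsProbabilityMeasure ν)
    (B : ℝ) (hB : 0 < B) :
    ∃ h₀ > (0 : ℝ), ∃ C : ℝ,
      ∀ h : ℝ, 0 < h → h ≤ h₀ →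
        ∀ φ : Vec Q, (∀ r : QI Q, |φ r| ≤ B) →
          (∀ q : QI Q, ∀ δ ∈ Aset dlo dhi,
            |CE σ γ η La Lb h δ φ q - φ q - h * Ham σ γ η La Lb φ δ q| ≤ C * h ^ 2) ∧
          (∀ lam : ℝ, 0 < lam → lam ≤ 1 → ∀ q : QI Q,
            |Top σ γ η La Lb ν h lam φ q - (φ q + h * Hlam σ γ η La Lb ν lam φ q)|
              ≤ C * h ^ 2) :=
  one_step_consistency_general Q σ γ η dlo dhi La Lb ν m hγ hLa hLb hν hνprob B hB

end MM
end
end
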